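/- Let n ≥ 2 be an integer, let u and t be vertices of the n×n torus grid, and let j ≥ 0 be an integer with 2^j ≤ d(u,t) ≤ 2^{j+1} and 2^{j+2} < n. Let V be a random vertex distributed over the vertices v ≠ u with probability Pr(V = v) = d(u,v)^{−2} / Z, where Z = Σ_{w ≠ u} d(u,w)^{−2}. Then the probability that V lies in the ball B_{2^j}(t) is at least 1/(32·ln(6n)). -/

import Mathlib

open Finset

/-- Lattice (ℓ¹) distance on the `n × n` torus grid, with vertices `Fin n × Fin n`.
The representative of `x₁ - x₂` modulo `n` is `(x₁ + n - x₂) % n`. -/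
def torusDist (n : ℕ) (u v : Fin n × Fin n) : ℕ :=
  min ((u.1.val + n - v.1.val) % n) (n - (u.1.val + n - v.1.val) % n) +
  min ((u.2.val + n - v.2.val) % n) (n - (u.2.val + n - v.2.val) % n)

lemma mod2 {n x : ℕ} (hx : x < 2*n) :
    x % n = if x < n then x else x - n := by
  split
  · exact Nat.mod_eq_of_lt ‹_›
  · rw [Nat.mod_eq_sub_mod (by omega), Nat.mod_eq_of_lt (by omega)]

def md (n c a : ℕ) : ℕ := min ((c + n - a) % n) (n - (c + n - a) % n)

lemma md_lemmas {n c a : ℕ} (hc : c < n) (ha : a < n) :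
    2 * md n c a ≤ n ∧ (md n c a = 0 ↔ a = c) := by
  unfold md
  rw [mod2 (by omega)]
  split <;> omega

lemma md_triangle {n a b c : ℕ} (ha : a < n) (hb : b < n) (hc : c < n) :
    md n a c ≤ md n a b + md n b c := by
  have h0 : a + n - c = (a + n - b) + (b + n - c) - n := by omega
  have h1 : (a + n - c) % n = ((a + n - b) % n + (b + n - c) % n) % n := by
    rw [← Nat.add_mod, h0]
    conv_rhs => rw [show (a + n - b) + (b + n - c) = ((a + n - b) + (b + n - c) - n) + n by omega]
    rw [Nat.add_mod_right]
  unfold md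
  rw [h1]
  have hA : (a + n - b) % n < n := Nat.mod_lt _ (by omega)
  have hB : (b + n - c) % n < n := Nat.mod_lt _ (by omega)
  rw [mod2 (by omega)]
  split <;> omega

lemma md_inv {n c a : ℕ} (hc : c < n) (ha : a < n) :
    (c + n - (c + n - a) % n) % n = a := by
  rw [mod2 (show c + n - a < 2*n by omega)]
  split <;> [skip; skip] <;> rw [mod2 (by omega)] <;> split <;> omega

lemma card_filter_md {n : ℕ} (hn : 0 < n) (c : Fin n) (p : ℕ → Prop) [DecidablePred p] :
    (univ.filter fun a : Fin n => p (md n c.1 a.1)).card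
      = (univ.filter fun x : Fin n => p (min x.1 (n - x.1))).card := by
  apply Finset.card_nbij' (i := fun a => (⟨(c.1 + n - a.1) % n, Nat.mod_lt _ hn⟩ : Fin n))
    (j := fun x => (⟨(c.1 + n - x.1) % n, Nat.mod_lt _ hn⟩ : Fin n))
  · intro a ha
    simp only [mem_coe, mem_filter, mem_univ, true_and] at ha ⊢
    exact ha
  · intro x hx
    simp only [mem_coe, mem_filter, mem_univ, true_and] at hx ⊢
    have : md n c.1 ((c.1 + n - x.1) % n) = min x.1 (n - x.1) := by
      unfold md
      rw [md_inv c.2 x.2]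
    rw [this]; exact hx
  · intro a _
    exact Fin.ext (md_inv c.2 a.2)
  · intro x _
    exact Fin.ext (md_inv c.2 x.2)

lemma card_min_eq_zero {n : ℕ} (hn : 0 < n) :
    (univ.filter fun x : Fin n => min x.1 (n - x.1) = 0).card = 1 := by
  have : (univ.filter fun x : Fin n => min x.1 (n - x.1) = 0) = {⟨0, hn⟩} := by
    ext x
    simp only [mem_filter, mem_univ, true_and, mem_singleton, Fin.ext_iff]
    have := x.2
    omega
  rw [this, card_singleton]

lemma card_min_eq_le {n k : ℕ} :
    (univ.filter fun x : Fin n => min x.1 (n - x.1) = k).card ≤ 2 := by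
  have h2 : ({k, n - k} : Finset ℕ).card ≤ 2 := card_insert_le _ _ |>.trans (by simp)
  refine le_trans (Finset.card_le_card_of_injOn (fun x => x.1) ?_ ?_) h2
  · intro x hx
    simp only [mem_coe, mem_filter, mem_univ, true_and] at hx
    simp only [mem_coe, mem_insert, mem_singleton]
    have := x.2
    omega
  · intro x _ y _ h
    exact Fin.ext h

lemma card_min_eq_ge {n k : ℕ} (hk : 1 ≤ k) (hkn : 2 * k < n) :
    2 ≤ (univ.filter fun x : Fin n => min x.1 (n - x.1) = k).card := by
  have hsub : ({⟨k, by omega⟩, ⟨n - k, by omega⟩} : Finset (Fin n)) ⊆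
      univ.filter fun x : Fin n => min x.1 (n - x.1) = k := by
    intro x hx
    simp only [mem_insert, mem_singleton] at hx
    simp only [mem_filter, mem_univ, true_and]
    rcases hx with h | h <;> subst h <;> simp only [Fin.val_mk] <;> omega
  refine le_trans (le_of_eq ?_) (Finset.card_le_card hsub)
  rw [card_insert_of_notMem (by simp [Fin.ext_iff]; omega), card_singleton]

lemma card_min_le_ge {n m : ℕ} (hmn : 2 * m < n) :
    2 * m + 1 ≤ (univ.filter fun x : Fin n => min x.1 (n - x.1) ≤ m).card := by
  have hn : 0 < n := by omega
  have hs : (2 * m + 1 : ℕ) = (range (m + 1) ∪ Icc (n - m) (n - 1)).card := by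
    rw [Finset.card_union_of_disjoint, card_range, Nat.card_Icc] <;>
      [omega; exact Finset.disjoint_left.2 (by intro a ha hb; simp at ha hb; omega)]
  rw [hs]
  apply Finset.card_le_card_of_injOn (fun x => (⟨x % n, Nat.mod_lt _ hn⟩ : Fin n))
  · intro x hx
    simp only [mem_coe, mem_union, mem_range, mem_Icc] at hx
    have hxn : x < n := by omega
    simp only [mem_coe, mem_filter, mem_univ, true_and, Nat.mod_eq_of_lt hxn]
    omega
  · intro x hx y hy h
    simp only [coe_union, coe_range, coe_Icc, Set.mem_union, Set.mem_Iio, Set.mem_Icc] at hx hy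
    have : x % n = y % n := congrArg Fin.val h
    rw [Nat.mod_eq_of_lt (by omega), Nat.mod_eq_of_lt (by omega)] at this
    exact this

lemma torusDist_eq (n : ℕ) (u v : Fin n × Fin n) :
    torusDist n u v = md n u.1.1 v.1.1 + md n u.2.1 v.2.1 := rfl

lemma sum_odd (r : ℕ) : ∑ k ∈ range r, (2*(2*k+1)) = 2*r^2 := by
  induction r with
  | zero => simp
  | succ m ih => rw [Finset.sum_range_succ, ih]; ring

lemma sphere_decomp {n : ℕ} (u : Fin n × Fin n) (i : ℕ) :
    (univ.filter fun w : Fin n × Fin n => torusDist n u w = i) =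
      (range (i+1)).biUnion (fun k => univ.filter
        fun w : Fin n × Fin n => md n u.1.1 w.1.1 = k ∧ md n u.2.1 w.2.1 = i - k) := by
  ext w
  simp only [mem_filter, mem_univ, true_and]
  simp only [mem_filter, mem_univ, true_and, mem_biUnion, mem_range, torusDist_eq]
  constructor
  · intro h
    exact ⟨md n u.1.1 w.1.1, by omega, rfl, by omega⟩
  · rintro ⟨k, hk, h1, h2⟩
    omega

lemma ball_decomp {n : ℕ} (u : Fin n × Fin n) (r : ℕ) :
    (univ.filter fun w : Fin n × Fin n => torusDist n u w ≤ r) =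
      (range (r+1)).biUnion (fun k => univ.filter
        fun w : Fin n × Fin n => md n u.1.1 w.1.1 = k ∧ md n u.2.1 w.2.1 ≤ r - k) := by
  ext w
  simp only [mem_filter, mem_univ, true_and]
  simp only [mem_filter, mem_univ, true_and, mem_biUnion, mem_range, torusDist_eq]
  constructor
  · intro h
    exact ⟨md n u.1.1 w.1.1, by omega, rfl, by omega⟩
  · rintro ⟨k, hk, h1, h2⟩
    omega

lemma prod_filter_card {n : ℕ} (u : Fin n × Fin n) (p q : ℕ → Prop)
    [DecidablePred p] [DecidablePred q] :
    (univ.filter fun w : Fin n × Fin n => p (md n u.1.1 w.1.1) ∧ q (md n u.2.1 w.2.1)).card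
      = (univ.filter fun a : Fin n => p (md n u.1.1 a.1)).card *
        (univ.filter fun a : Fin n => q (md n u.2.1 a.1)).card := by
  rw [← Finset.univ_product_univ,
    Finset.filter_product (fun a : Fin n => p (md n u.1.1 a.1)) (fun a : Fin n => q (md n u.2.1 a.1)),
    card_product]

lemma sphere_card_le {n : ℕ} (hn : 0 < n) (u : Fin n × Fin n) {i : ℕ} (hi : 1 ≤ i) :
    (univ.filter fun w : Fin n × Fin n => torusDist n u w = i).card ≤ 4 * i := by
  rw [sphere_decomp]
  refine le_trans (Finset.card_biUnion_le) ?_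
  have key : ∀ k, (univ.filter fun w : Fin n × Fin n =>
      md n u.1.1 w.1.1 = k ∧ md n u.2.1 w.2.1 = i - k).card
      = (univ.filter fun x : Fin n => min x.1 (n - x.1) = k).card *
        (univ.filter fun x : Fin n => min x.1 (n - x.1) = i - k).card := by
    intro k
    rw [prod_filter_card u (· = k) (· = i - k),
      card_filter_md hn u.1 (· = k), card_filter_md hn u.2 (· = i - k)]
  obtain ⟨m, rfl⟩ : ∃ m, i = m + 1 := ⟨i - 1, by omega⟩
  rw [Finset.sum_range_succ', Finset.sum_range_succ]
  have h0 : (univ.filter fun w : Fin n × Fin n =>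
      md n u.1.1 w.1.1 = 0 ∧ md n u.2.1 w.2.1 = m + 1 - 0).card ≤ 2 := by
    rw [key 0, card_min_eq_zero hn]
    simpa using card_min_eq_le (n := n) (k := m + 1 - 0)
  have hlast : (univ.filter fun w : Fin n × Fin n =>
      md n u.1.1 w.1.1 = m + 1 ∧ md n u.2.1 w.2.1 = m + 1 - (m+1)).card ≤ 2 := by
    rw [key (m+1), show m + 1 - (m+1) = 0 by omega, card_min_eq_zero hn, mul_one]
    exact card_min_eq_le
  have hmid : ∀ k ∈ range m, (univ.filter fun w : Fin n × Fin n =>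
      md n u.1.1 w.1.1 = k + 1 ∧ md n u.2.1 w.2.1 = m + 1 - (k+1)).card ≤ 4 := by
    intro k _
    rw [key (k+1)]
    exact Nat.mul_le_mul card_min_eq_le card_min_eq_le
  have hsum' : ∑ k ∈ range m, (univ.filter fun w : Fin n × Fin n =>
      md n u.1.1 w.1.1 = k + 1 ∧ md n u.2.1 w.2.1 = m + 1 - (k+1)).card ≤ 4 * m :=
    le_trans (Finset.sum_le_sum hmid) (by simp [Finset.sum_const, card_range]; omega)
  exact le_trans (add_le_add (add_le_add hsum' hlast) h0) (by omega)

lemma ball_card_ge {n : ℕ} (u : Fin n × Fin n) {r : ℕ} (hr : 2 * r < n) :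
    2*r^2 + 2*r + 1 ≤ (univ.filter fun w : Fin n × Fin n => torusDist n u w ≤ r).card := by
  have hn : 0 < n := by omega
  rw [ball_decomp]
  rw [Finset.card_biUnion]
  swap
  · intro k hk l hl hkl
    refine Finset.disjoint_left.2 ?_
    intro w hw hw'
    simp only [mem_filter] at hw hw'
    omega
  have key : ∀ k, (univ.filter fun w : Fin n × Fin n =>
      md n u.1.1 w.1.1 = k ∧ md n u.2.1 w.2.1 ≤ r - k).card
      = (univ.filter fun x : Fin n => min x.1 (n - x.1) = k).card *
        (univ.filter fun x : Fin n => min x.1 (n - x.1) ≤ r - k).card := by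
    intro k
    rw [prod_filter_card u (· = k) (· ≤ r - k),
      card_filter_md hn u.1 (· = k), card_filter_md hn u.2 (· ≤ r - k)]
  rw [Finset.sum_range_succ']
  have h0 : 2*r + 1 ≤ (univ.filter fun w : Fin n × Fin n =>
      md n u.1.1 w.1.1 = 0 ∧ md n u.2.1 w.2.1 ≤ r - 0).card := by
    rw [key 0, card_min_eq_zero hn, one_mul]
    simpa using card_min_le_ge (n := n) (m := r) (by omega)
  have hmid : ∀ k ∈ range r, 2*(2*(r-1-k)+1) ≤ (univ.filter fun w : Fin n × Fin n =>
      md n u.1.1 w.1.1 = k + 1 ∧ md n u.2.1 w.2.1 ≤ r - (k+1)).card := by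
    intro k hk
    simp only [mem_range] at hk
    rw [key (k+1)]
    have e1 : 2 ≤ (univ.filter fun x : Fin n => min x.1 (n - x.1) = k + 1).card :=
      card_min_eq_ge (by omega) (by omega)
    have e2 : 2*(r-1-k) + 1 ≤ (univ.filter fun x : Fin n => min x.1 (n - x.1) ≤ r - (k+1)).card := by
      have := card_min_le_ge (n := n) (m := r - (k+1)) (by omega)
      calc 2*(r-1-k) + 1 = 2*(r-(k+1)) + 1 := by omega
        _ ≤ _ := this
    exact Nat.mul_le_mul e1 e2
  have hsum : ∑ k ∈ range r, (2*(2*(r-1-k)+1)) = 2*r^2 := by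
    rw [← sum_odd r, ← Finset.sum_range_reflect (fun k => 2*(2*k+1)) r]
  have hsum' : 2*r^2 ≤ ∑ k ∈ range r, (univ.filter fun w : Fin n × Fin n =>
      md n u.1.1 w.1.1 = k + 1 ∧ md n u.2.1 w.2.1 ≤ r - (k+1)).card :=
    hsum ▸ Finset.sum_le_sum hmid
  exact le_trans (Nat.le_of_eq (by ring)) (add_le_add hsum' h0)

lemma torusDist_le_n {n : ℕ} (u w : Fin n × Fin n) : torusDist n u w ≤ n := by
  have h1 := (md_lemmas u.1.2 w.1.2).1
  have h2 := (md_lemmas u.2.2 w.2.2).1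
  rw [torusDist_eq]; omega

lemma torusDist_eq_zero {n : ℕ} {u w : Fin n × Fin n} (h : torusDist n u w = 0) : w = u := by
  rw [torusDist_eq] at h
  have h1 := (md_lemmas u.1.2 w.1.2).2
  have h2 := (md_lemmas u.2.2 w.2.2).2
  exact Prod.ext (Fin.ext (by omega)) (Fin.ext (by omega))

lemma Z_le {n : ℕ} (hn : 2 ≤ n) (u : Fin n × Fin n) :
    ∑ w ∈ univ.erase u, ((torusDist n u w : ℝ) ^ 2)⁻¹ ≤ 4 * Real.log (6 * n) := by
  have hn0 : 0 < n := by omega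
  rw [← Finset.sum_fiberwise_of_maps_to (g := fun w => torusDist n u w) (t := range (n+1))
    (fun w _ => by simp only [mem_range]; exact Nat.lt_succ_of_le (torusDist_le_n u w))]
  have hinner : ∀ i ∈ range (n+1), (∑ w ∈ (univ.erase u).filter (fun w => torusDist n u w = i),
      ((torusDist n u w : ℝ) ^ 2)⁻¹) ≤ 4 * ((i:ℝ))⁻¹ := by
    intro i hi
    have : ∀ w ∈ (univ.erase u).filter (fun w => torusDist n u w = i),
        ((torusDist n u w : ℝ) ^ 2)⁻¹ = (((i:ℝ)) ^ 2)⁻¹ := by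
      intro w hw
      simp only [mem_filter] at hw
      rw [hw.2]
    rw [Finset.sum_congr rfl this, Finset.sum_const, nsmul_eq_mul]
    rcases Nat.eq_zero_or_pos i with rfl | hi1
    · simp
    have hcard : ((univ.erase u).filter (fun w => torusDist n u w = i)).card ≤ 4 * i :=
      le_trans (Finset.card_le_card (Finset.filter_subset_filter _ (Finset.erase_subset _ _)))
        (sphere_card_le hn0 u hi1)
    calc (((univ.erase u).filter (fun w => torusDist n u w = i)).card : ℝ) * ((i:ℝ) ^ 2)⁻¹
        ≤ (4 * i : ℕ) * ((i:ℝ) ^ 2)⁻¹ := by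
          apply mul_le_mul_of_nonneg_right _ (by positivity)
          exact_mod_cast hcard
      _ = 4 * ((i:ℝ))⁻¹ := by
          push_cast
          have : (i:ℝ) ≠ 0 := by positivity
          field_simp
  refine le_trans (Finset.sum_le_sum hinner) ?_
  rw [Finset.sum_range_succ']
  simp only [Nat.cast_zero, inv_zero, mul_zero, add_zero, Nat.cast_add, Nat.cast_one]
  have heq : (∑ i ∈ range n, 4 * (((i:ℝ)+1))⁻¹) = 4 * ((harmonic n : ℝ)) := by
    rw [harmonic]
    push_cast
    rw [Finset.mul_sum]
  rw [heq]
  have h1 : (harmonic n : ℝ) ≤ 1 + Real.log n := harmonic_le_one_add_log n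
  have h6 : (1:ℝ) + Real.log n ≤ Real.log (6 * n) := by
    rw [Real.log_mul (by norm_num) (by positivity)]
    have : (1:ℝ) ≤ Real.log 6 := by
      rw [Real.le_log_iff_exp_le (by norm_num)]
      calc Real.exp 1 ≤ 2.7182818286 := (Real.exp_one_lt_d9).le
        _ ≤ 6 := by norm_num
    linarith
  linarith

/-- for `n ≥ 2` and vertices `u, t` with `2^j ≤ d(u,t) ≤ 2^{j+1}` and
`2^{j+2} < n`, a single long-range connection `V` of `u` (chosen among `v ≠ u` with
probability `d(u,v)⁻²/Z`, `Z = Σ_{w ≠ u} d(u,w)⁻²`) lies in the ball `B_{2^j}(t)` with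
probability at least `1/(32·ln(6n))`. -/
theorem statement16 (n : ℕ) (hn : 2 ≤ n) (u t : Fin n × Fin n) (j : ℕ)
    (h1 : 2 ^ j ≤ torusDist n u t) (h2 : torusDist n u t ≤ 2 ^ (j + 1))
    (h3 : 2 ^ (j + 2) < n) :
    (∑ v ∈ (univ.erase u).filter (fun v => torusDist n t v ≤ 2 ^ j),
        ((torusDist n u v : ℝ) ^ 2)⁻¹) /
      (∑ w ∈ univ.erase u, ((torusDist n u w : ℝ) ^ 2)⁻¹) ≥
    1 / (32 * Real.log (6 * n)) := by
  set r := 2 ^ j with hr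
  have hrpos : 1 ≤ r := Nat.one_le_two_pow
  -- term lower bound on the ball
  have hterm : ∀ v ∈ (univ.erase u).filter (fun v => torusDist n t v ≤ r),
      (((4 * r : ℕ) : ℝ) ^ 2)⁻¹ ≤ ((torusDist n u v : ℝ) ^ 2)⁻¹ := by
    intro v hv
    simp only [mem_filter, mem_erase] at hv
    have hd1 : 1 ≤ torusDist n u v := by
      rcases Nat.eq_zero_or_pos (torusDist n u v) with h | h
      · exact absurd (torusDist_eq_zero h) hv.1.1
      · exact h
    have htri : torusDist n u v ≤ torusDist n u t + torusDist n t v := by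
      rw [torusDist_eq, torusDist_eq, torusDist_eq]
      have a1 := md_triangle (n := n) u.1.2 t.1.2 v.1.2
      have a2 := md_triangle (n := n) u.2.2 t.2.2 v.2.2
      omega
    have hle : torusDist n u v ≤ 4 * r := by
      have : (2:ℕ) ^ (j+1) = 2 * r := by rw [hr]; ring
      omega
    apply inv_anti₀
    · have : (0:ℝ) < (torusDist n u v : ℝ) := by exact_mod_cast hd1
      positivity
    · have : ((torusDist n u v : ℕ) : ℝ) ≤ ((4 * r : ℕ) : ℝ) := by exact_mod_cast hle
      have h0 : (0:ℝ) ≤ (torusDist n u v : ℝ) := by positivity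
      exact pow_le_pow_left₀ h0 this 2
  -- cardinality lower bound
  have hrn : 2 * r < n := by
    have : (2:ℕ) ^ (j+2) = 4 * r := by rw [hr]; ring
    omega
  have hball := ball_card_ge t (r := r) hrn
  have hcard : 2 * r ^ 2 ≤ ((univ.erase u).filter (fun v => torusDist n t v ≤ r)).card := by
    have he : (univ.erase u).filter (fun v => torusDist n t v ≤ r)
        = ((univ.filter (fun v => torusDist n t v ≤ r)).erase u) := by
      rw [Finset.filter_erase]
    rw [he]
    have := Finset.pred_card_le_card_erase (s := univ.filter (fun v => torusDist n t v ≤ r)) (a := u)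
    omega
  -- numerator lower bound
  have hnum : (1:ℝ)/8 ≤ ∑ v ∈ (univ.erase u).filter (fun v => torusDist n t v ≤ r),
      ((torusDist n u v : ℝ) ^ 2)⁻¹ := by
    have hs := Finset.card_nsmul_le_sum _ _ _ hterm
    rw [nsmul_eq_mul] at hs
    refine le_trans ?_ hs
    have hx : (0:ℝ) < (r:ℝ) := by exact_mod_cast hrpos
    have hcard' : (2 * (r:ℝ)^2) ≤ (((univ.erase u).filter (fun v => torusDist n t v ≤ r)).card : ℝ) := by
      exact_mod_cast hcard
    calc (1:ℝ)/8 = (2 * (r:ℝ)^2) * (((4 * r : ℕ):ℝ) ^ 2)⁻¹ := by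
          push_cast
          field_simp
          ring
      _ ≤ _ := by
          apply mul_le_mul_of_nonneg_right hcard'
          positivity
  -- denominator bound
  have hZle := Z_le hn u
  have hZpos : (0:ℝ) < ∑ w ∈ univ.erase u, ((torusDist n u w : ℝ) ^ 2)⁻¹ := by
    have hsub : (univ.erase u).filter (fun v => torusDist n t v ≤ r) ⊆ univ.erase u :=
      Finset.filter_subset _ _
    have hnn : ∀ w ∈ univ.erase u, w ∉ (univ.erase u).filter (fun v => torusDist n t v ≤ r) →
        (0:ℝ) ≤ ((torusDist n u w : ℝ) ^ 2)⁻¹ := fun w _ _ => by positivity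
    have := Finset.sum_le_sum_of_subset_of_nonneg hsub hnn
    linarith
  have hLpos : (0:ℝ) < Real.log (6 * n) := by
    apply Real.log_pos
    have : (2:ℝ) ≤ (n:ℝ) := by exact_mod_cast hn
    nlinarith
  rw [ge_iff_le, show (1:ℝ) / (32 * Real.log (6 * n)) = ((1:ℝ)/8) / (4 * Real.log (6 * n)) by
    field_simp; ring]
  exact div_le_div₀ (le_trans (by norm_num) hnum) hnum hZpos hZle
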